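/- arXiv:1210.3462 — 3 statements merged into one kernel-verified Lean document; each statement's English description precedes it below -/
import Mathlib

section
/- Define h_m = ((λ_m − 1)/(1 − λ'_m)) · Σ_{i=2}^∞ log(m(i−1)+1)/λ_m^i for integer m ≥ 1, where λ_m = (m+√(m²+4))/2 and λ'_m = (m−√(m²+4))/2. Then h_m → 0 as m → ∞. -/
/-!
Since `λ_m + λ'_m = m` and `λ_m λ'_m = -1`, we have `(λ_m - 1)(1 - λ'_m) = m`.
Bernoulli's inequality `m (i + 1) + 1 ≤ (m + 1)^(i + 1)` bounds the `i`-th term of the series by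
`(i + 1) log (m + 1) / λ_m^(i + 2)`, and `∑ (i + 1) / λ^(i + 2) = 1 / (λ - 1)²`.
Hence `0 ≤ h_m ≤ log (m + 1) / ((λ_m - 1)(1 - λ'_m)) = log (m + 1) / m → 0`.
-/

open Real Filter Topology

lemma log_mul_add_one_le {x : ℝ} (hx : 0 ≤ x) (n : ℕ) :
    log (x * n + 1) ≤ n * log (x + 1) := by
  rw [← log_pow, add_comm x, add_comm _ (1 : ℝ), mul_comm x]
  exact log_le_log (by positivity) (one_add_mul_le_pow (by linarith) n)

lemma hasSum_succ_div_pow {L : ℝ} (hL : 1 < L) :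
    HasSum (fun i : ℕ => ((i : ℝ) + 1) / L ^ (i + 2)) (1 / (L - 1) ^ 2) := by
  have hr : ‖L⁻¹‖ < 1 := by
    rw [norm_inv, norm_of_nonneg (by linarith)]
    exact inv_lt_one_of_one_lt₀ hL
  have hL0 : L ≠ 0 := by linarith
  have hL1 : L - 1 ≠ 0 := by linarith
  have hf : (fun i : ℕ => ((i : ℝ) + 1) / L ^ (i + 2))
      = fun i => (L ^ 2)⁻¹ * (((i + 1).choose 1 : ℕ) * L⁻¹ ^ i) := by
    ext i
    simp [pow_add]
    field_simp
  have hv : 1 / (L - 1) ^ 2 = (L ^ 2)⁻¹ * (1 / (1 - L⁻¹) ^ (1 + 1)) := by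
    rw [one_add_one_eq_two]
    field_simp
  rw [hf, hv]
  exact (hasSum_choose_mul_geometric_of_norm_lt_one 1 hr).mul_left _

lemma log_mul_succ_add_one_div_pow_nonneg {x L : ℝ} (hx : 0 ≤ x) (hL : 0 ≤ L) (i : ℕ) :
    0 ≤ log (x * (i + 1) + 1) / L ^ (i + 2) :=
  div_nonneg (log_nonneg (by nlinarith [i.cast_nonneg (α := ℝ)])) (by positivity)

lemma tsum_log_mul_succ_add_one_div_pow_le {x L : ℝ} (hx : 0 ≤ x) (hL : 1 < L) :
    ∑' i : ℕ, log (x * (i + 1) + 1) / L ^ (i + 2) ≤ log (x + 1) / (L - 1) ^ 2 := by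
  have hterm (i : ℕ) :
      log (x * (i + 1) + 1) / L ^ (i + 2) ≤ log (x + 1) * ((i + 1) / L ^ (i + 2)) := by
    rw [mul_div_assoc', mul_comm (log _)]
    gcongr
    exact_mod_cast log_mul_add_one_le hx (i + 1)
  have hsum := (hasSum_succ_div_pow hL).mul_left (log (x + 1))
  have hsummable : Summable fun i : ℕ => log (x * (i + 1) + 1) / L ^ (i + 2) :=
    .of_nonneg_of_le (log_mul_succ_add_one_div_pow_nonneg hx (by linarith)) hterm hsum.summable
  calc ∑' i : ℕ, log (x * (i + 1) + 1) / L ^ (i + 2)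
      ≤ log (x + 1) * (1 / (L - 1) ^ 2) :=
        (hsummable.tsum_le_tsum hterm hsum.summable).trans_eq hsum.tsum_eq
    _ = log (x + 1) / (L - 1) ^ 2 := by ring

lemma tendsto_log_add_one_div_natCast :
    Tendsto (fun m : ℕ => log (m + 1) / m) atTop (𝓝 0) := by
  have h := (tendsto_pow_log_div_mul_add_atTop 1 (-1) 1 one_ne_zero).comp
    (tendsto_atTop_add_const_right atTop 1 tendsto_natCast_atTop_atTop)
  simpa [Function.comp_def] using h

-- `λ_m` and `λ'_m`, the roots of `t² = m t + 1`.
noncomputable def nobleMean (m : ℝ) : ℝ := (m + √(m ^ 2 + 4)) / 2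

noncomputable def nobleMeanConj (m : ℝ) : ℝ := (m - √(m ^ 2 + 4)) / 2

noncomputable def nobleEntropy (m : ℝ) : ℝ :=
  (nobleMean m - 1) / (1 - nobleMeanConj m) *
    ∑' i : ℕ, log (m * (i + 1) + 1) / nobleMean m ^ (i + 2)

section NobleMean

variable {m : ℝ}

lemma one_lt_nobleMean (hm : 0 < m) : 1 < nobleMean m := by
  have : 2 < √(m ^ 2 + 4) := by
    rw [show (2 : ℝ) = √(2 ^ 2) by simp]
    exact sqrt_lt_sqrt (by positivity) (by nlinarith)
  unfold nobleMean
  linarith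

lemma nobleMean_sub_one_mul_one_sub_nobleMeanConj (m : ℝ) :
    (nobleMean m - 1) * (1 - nobleMeanConj m) = m := by
  have : √(m ^ 2 + 4) ^ 2 = m ^ 2 + 4 := sq_sqrt (by positivity)
  unfold nobleMean nobleMeanConj
  linear_combination (1 / 4 : ℝ) * this

lemma one_sub_nobleMeanConj_pos (hm : 0 < m) : 0 < 1 - nobleMeanConj m := by
  have h : 0 < (nobleMean m - 1) * (1 - nobleMeanConj m) := by
    rwa [nobleMean_sub_one_mul_one_sub_nobleMeanConj]
  exact pos_of_mul_pos_right h (sub_pos.2 (one_lt_nobleMean hm)).le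

end NobleMean

lemma nobleEntropy_nonneg {m : ℝ} (hm : 0 < m) : 0 ≤ nobleEntropy m :=
  mul_nonneg
    (div_nonneg (sub_nonneg.2 (one_lt_nobleMean hm).le) (one_sub_nobleMeanConj_pos hm).le)
    (tsum_nonneg (log_mul_succ_add_one_div_pow_nonneg hm.le (by linarith [one_lt_nobleMean hm])))

lemma nobleEntropy_le {m : ℝ} (hm : 0 < m) : nobleEntropy m ≤ log (m + 1) / m := by
  have hL := sub_pos.2 (one_lt_nobleMean hm)
  have hL' := one_sub_nobleMeanConj_pos hm
  calc nobleEntropy m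
      ≤ (nobleMean m - 1) / (1 - nobleMeanConj m) * (log (m + 1) / (nobleMean m - 1) ^ 2) := by
        unfold nobleEntropy
        gcongr
        exact tsum_log_mul_succ_add_one_div_pow_le hm.le (one_lt_nobleMean hm)
    _ = log (m + 1) / ((nobleMean m - 1) * (1 - nobleMeanConj m)) := by
        field_simp
    _ = log (m + 1) / m := by rw [nobleMean_sub_one_mul_one_sub_nobleMeanConj]

theorem entropy_tendsto_zero :
    Filter.Tendsto (fun m : ℕ =>
      ((((m : ℝ) + Real.sqrt (m ^ 2 + 4)) / 2 - 1) /
        (1 - ((m : ℝ) - Real.sqrt (m ^ 2 + 4)) / 2)) *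
        ∑' i : ℕ, Real.log (m * (i + 1) + 1) /
          (((m : ℝ) + Real.sqrt (m ^ 2 + 4)) / 2) ^ (i + 2))
      Filter.atTop (nhds 0) := by
  change Tendsto (fun m : ℕ => nobleEntropy m) atTop (𝓝 0)
  have hpos : ∀ᶠ m : ℕ in atTop, (0 : ℝ) < m := by
    filter_upwards [eventually_gt_atTop 0] with m hm using Nat.cast_pos.2 hm
  exact squeeze_zero' (hpos.mono fun _ ↦ nobleEntropy_nonneg)
    (hpos.mono fun _ ↦ nobleEntropy_le) tendsto_log_add_one_div_natCast
end

section
/- Fix an integer m ≥ 1 and real numbers p_0, p_m ∈ [0,1]. The 4×4 matrix M_{m,2} with rows ((m−1)+p₀p_m, (m−1)+p₀, 1−p₀, 1), (1−p₀p_m, 1−p₀, p₀, 0), (1−p₀p_m, 1, 0, 0), (p₀p_m, 0, 0, 0) has eigenvalues exactly {λ_m, λ'_m, −p₀, p₀p_m}, where λ_m, λ'_m are the roots of x² = mx + 1. -/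
/-!
Cofactor expansion factors the characteristic polynomial of `M_{m,2}` as
`(x² - m x - 1) (x + p₀) (x - p₀ p_m)`, and the quadratic factor has discriminant `m² + 4 > 0`,
so its roots are `λ_m` and `λ'_m`.
-/

open Matrix Polynomial

def inducedMatrix {R : Type*} [CommRing R] (a p q : R) : Matrix (Fin 4) (Fin 4) R :=
  !![a - 1 + p * q, a - 1 + p, 1 - p, 1;
     1 - p * q, 1 - p, p, 0;
     1 - p * q, 1, 0, 0;
     p * q, 0, 0, 0]

theorem eval_charpoly_inducedMatrix {R : Type*} [CommRing R] (a p q x : R) :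
    (inducedMatrix a p q).charpoly.eval x = (x ^ 2 - a * x - 1) * (x + p) * (x - p * q) := by
  simp [eval_charpoly, inducedMatrix, det_succ_row_zero, Fin.sum_univ_succ, Fin.succAbove]
  ring

theorem mem_spectrum_inducedMatrix_iff {K : Type*} [Field K] (a p q x : K) :
    x ∈ spectrum K (inducedMatrix a p q) ↔ x ^ 2 - a * x - 1 = 0 ∨ x = -p ∨ x = p * q := by
  rw [mem_spectrum_iff_isRoot_charpoly, IsRoot.def, eval_charpoly_inducedMatrix, mul_eq_zero,
    mul_eq_zero, add_eq_zero_iff_eq_neg, sub_eq_zero (a := x), or_assoc]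

theorem sq_sub_mul_sub_one_eq_zero_iff (a x : ℝ) :
    x ^ 2 - a * x - 1 = 0 ↔ x = (a + √(a ^ 2 + 4)) / 2 ∨ x = (a - √(a ^ 2 + 4)) / 2 := by
  have hdiscrim : discrim 1 (-a) (-1) = √(a ^ 2 + 4) * √(a ^ 2 + 4) := by
    rw [discrim, Real.mul_self_sqrt (by positivity)]
    ring
  convert quadratic_eq_zero_iff one_ne_zero hdiscrim x using 1 <;> ring_nf

theorem induced_matrix_spectrum_general (m : ℕ) (p0 pm : ℝ)
    (M : Matrix (Fin 4) (Fin 4) ℝ)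
    (hM : M = !![(m - 1 : ℝ) + p0 * pm, (m - 1 : ℝ) + p0, 1 - p0, 1;
                 1 - p0 * pm, 1 - p0, p0, 0;
                 1 - p0 * pm, 1, 0, 0;
                 p0 * pm, 0, 0, 0]) :
    spectrum ℝ M =
      {(m + Real.sqrt (m ^ 2 + 4)) / 2, (m - Real.sqrt (m ^ 2 + 4)) / 2,
        -p0, p0 * pm} := by
  change M = inducedMatrix (m : ℝ) p0 pm at hM
  ext x
  rw [hM, mem_spectrum_inducedMatrix_iff, sq_sub_mul_sub_one_eq_zero_iff]
  simp only [Set.mem_insert_iff, Set.mem_singleton_iff, or_assoc]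

theorem induced_matrix_spectrum (m : ℕ) (hm : 1 ≤ m) (p0 pm : ℝ)
    (hp0 : p0 ∈ Set.Icc (0 : ℝ) 1) (hpm : pm ∈ Set.Icc (0 : ℝ) 1)
    (M : Matrix (Fin 4) (Fin 4) ℝ)
    (hM : M = !![(m - 1 : ℝ) + p0 * pm, (m - 1 : ℝ) + p0, 1 - p0, 1;
                 1 - p0 * pm, 1 - p0, p0, 0;
                 1 - p0 * pm, 1, 0, 0;
                 p0 * pm, 0, 0, 0]) :
    spectrum ℝ M =
      {(m + Real.sqrt (m ^ 2 + 4)) / 2, (m - Real.sqrt (m ^ 2 + 4)) / 2,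
        -p0, p0 * pm} :=
  induced_matrix_spectrum_general m p0 pm M hM
end

section
/- For every integer m ≥ 1 and fixed p₀ ∈ (0,1), p_m ∈ (0,1), the 4×4 matrix M_{m,2} (rows ((m−1)+p₀p_m, (m−1)+p₀, 1−p₀, 1), (1−p₀p_m, 1−p₀, p₀, 0), (1−p₀p_m, 1, 0, 0), (p₀p_m, 0, 0, 0)) is primitive, i.e., some power of it has all entries strictly positive. -/
/-!
Every row of the matrix has a positive first entry and its first row is positive, so in its
graph of positive entries every index reaches every other one through the index `0` in exactly
two steps: the square of the matrix is already positive.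
-/

namespace Matrix

variable {n R : Type*} [Fintype n] [DecidableEq n] [Ring R] [LinearOrder R] [IsStrictOrderedRing R]

theorem sq_apply_pos_of_pos_row_col {A : Matrix n n R} (hA : ∀ i j, 0 ≤ A i j) (k : n)
    (hcol : ∀ i, 0 < A i k) (hrow : ∀ j, 0 < A k j) (i j : n) : 0 < (A ^ 2) i j := by
  rw [sq, mul_apply]
  exact Finset.sum_pos' (fun l _ => mul_nonneg (hA i l) (hA l j))
    ⟨k, Finset.mem_univ k, mul_pos (hcol i) (hrow j)⟩

theorem isPrimitive_of_pos_row_col {A : Matrix n n R} (hA : ∀ i j, 0 ≤ A i j) (k : n)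
    (hcol : ∀ i, 0 < A i k) (hrow : ∀ j, 0 < A k j) : A.IsPrimitive :=
  ⟨hA, 2, two_pos, sq_apply_pos_of_pos_row_col hA k hcol hrow⟩

end Matrix

theorem induced_matrix_primitive (m : ℕ) (hm : 1 ≤ m) (p0 pm : ℝ)
    (hp0 : p0 ∈ Set.Ioo (0 : ℝ) 1) (hpm : pm ∈ Set.Ioo (0 : ℝ) 1)
    (M : Matrix (Fin 4) (Fin 4) ℝ)
    (hM : M = !![(m - 1 : ℝ) + p0 * pm, (m - 1 : ℝ) + p0, 1 - p0, 1;
                 1 - p0 * pm, 1 - p0, p0, 0;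
                 1 - p0 * pm, 1, 0, 0;
                 p0 * pm, 0, 0, 0]) :
    ∃ k : ℕ, 1 ≤ k ∧ ∀ i j, 0 < (M ^ k) i j := by
  obtain ⟨hp0_pos, hp0_lt⟩ := hp0
  obtain ⟨hpm_pos, hpm_lt⟩ := hpm
  have hm_sub : (0 : ℝ) ≤ m - 1 := sub_nonneg.mpr (by exact_mod_cast hm)
  have hprod_pos : 0 < p0 * pm := mul_pos hp0_pos hpm_pos
  have hprod_lt : p0 * pm < 1 := mul_lt_one_of_nonneg_of_lt_one_left hp0_pos.le hp0_lt hpm_lt.le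
  have hnonneg : ∀ i j, 0 ≤ M i j := by
    subst hM
    intro i j
    fin_cases i <;> fin_cases j <;> simp <;> linarith
  have hcol : ∀ i, 0 < M i 0 := by
    subst hM
    intro i
    fin_cases i <;> simp <;> linarith
  have hrow : ∀ j, 0 < M 0 j := by
    subst hM
    intro j
    fin_cases j <;> simp <;> linarith
  exact (Matrix.isPrimitive_of_pos_row_col hnonneg 0 hcol hrow).exists_pos_pow
end
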